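/- Assume the hierarchy S is well-formed. Then for all x and y in the extended hierarchy, join(x, y) is the least upper bound of x and y: x ≤ join(x, y), y ≤ join(x, y), and every z in the extended hierarchy with x ≤ z and y ≤ z satisfies join(x, y) ≤ z. Consequently the extended hierarchy with join is a semilattice with supremum operation join. -/

import Mathlib

/-- Minimal common subclasses of `a` and `b`: the minimal elements of the set
`{c | a ≤ c ∧ b ≤ c}` of common upper bounds of `a` and `b`. -/
def mcs {S : Type*} [PartialOrder S] (a b : S) : Set S :=
  {c | Minimal (fun c => a ≤ c ∧ b ≤ c) c}

open Classical in
/-- The join operator on the extended hierarchy `WithTop S`: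
`join a b = c` if `a, b ∈ S` and `mcs a b = {c}`, and `⊤` otherwise. -/
noncomputable def hjoin {S : Type*} [PartialOrder S] : WithTop S → WithTop S → WithTop S
  | some a, some b => if h : ∃ c, mcs a b = {c} then some h.choose else ⊤
  | _, _ => ⊤

/-! In a finite order every common upper bound of `a` and `b` lies above a minimal one, i.e. above
an element of `mcs a b`. Well-formedness leaves two cases: `mcs a b = {c}`, and then `c` is below
every common upper bound, or `mcs a b = ∅`, and then `a` and `b` have no common upper bound in `S`,
so `⊤` is their least upper bound in `WithTop S`. -/

section

variable {S : Type*} [PartialOrder S]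

lemma exists_mem_mcs_le [WellFoundedLT S] {a b d : S} (ha : a ≤ d) (hb : b ≤ d) :
    ∃ m ∈ mcs a b, m ≤ d := by
  obtain ⟨m, hmd, hm⟩ := exists_minimal_le_of_wellFoundedLT (fun c => a ≤ c ∧ b ≤ c) d ⟨ha, hb⟩
  exact ⟨m, hm, hmd⟩

lemma hjoin_top_left (y : WithTop S) : hjoin ⊤ y = ⊤ := by
  cases y <;> rfl

lemma hjoin_top_right (x : WithTop S) : hjoin x ⊤ = ⊤ := by
  cases x <;> rfl

lemma hjoin_coe_of_mcs_eq_singleton {a b c : S} (h : mcs a b = {c}) :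
    hjoin (a : WithTop S) b = c := by
  have hex : ∃ c, mcs a b = {c} := ⟨c, h⟩
  have hc : hex.choose = c := Set.singleton_eq_singleton_iff.mp (hex.choose_spec.symm.trans h)
  exact (dif_pos hex).trans (congrArg WithTop.some hc)

lemma hjoin_coe_of_mcs_eq_empty {a b : S} (h : mcs a b = ∅) : hjoin (a : WithTop S) b = ⊤ := by
  have hex : ¬∃ c, mcs a b = {c} := by
    rintro ⟨c, hc⟩
    simp [hc] at h
  exact dif_neg hex

lemma isLUB_of_top_mem {α : Type*} [Preorder α] [OrderTop α] {s : Set α} (h : ⊤ ∈ s) :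
    IsLUB s ⊤ :=
  ⟨fun _ _ => le_top, fun _ hz => hz h⟩

lemma coe_mem_upperBounds_pair {a b d : S} :
    (d : WithTop S) ∈ upperBounds {(a : WithTop S), (b : WithTop S)} ↔ a ≤ d ∧ b ≤ d := by
  simp [upperBounds_insert]

variable [WellFoundedLT S] {a b : S}

lemma isLUB_coe_pair_of_mcs_eq_singleton {c : S} (h : mcs a b = {c}) :
    IsLUB ({(a : WithTop S), (b : WithTop S)} : Set (WithTop S)) (c : WithTop S) := by
  have hc : Minimal (fun c => a ≤ c ∧ b ≤ c) c := h.ge rfl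
  refine ⟨?_, fun z hz => ?_⟩
  · exact coe_mem_upperBounds_pair.mpr hc.prop
  induction z with
  | top => exact le_top
  | coe d =>
    rw [coe_mem_upperBounds_pair] at hz
    obtain ⟨m, hm, hmd⟩ := exists_mem_mcs_le hz.1 hz.2
    rw [h, Set.mem_singleton_iff] at hm
    exact WithTop.coe_le_coe.mpr (hm ▸ hmd)

lemma isLUB_coe_pair_top_of_mcs_eq_empty (h : mcs a b = ∅) :
    IsLUB ({(a : WithTop S), (b : WithTop S)} : Set (WithTop S)) ⊤ := by
  refine ⟨fun _ _ => le_top, fun z hz => ?_⟩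
  induction z with
  | top => exact le_rfl
  | coe d =>
    rw [coe_mem_upperBounds_pair] at hz
    obtain ⟨m, hm, -⟩ := exists_mem_mcs_le hz.1 hz.2
    simp [h] at hm

theorem isLUB_hjoin (hwf : ∀ a b : S, (mcs a b).Subsingleton) (x y : WithTop S) :
    IsLUB {x, y} (hjoin x y) := by
  induction x with
  | top =>
    rw [hjoin_top_left]
    exact isLUB_of_top_mem (by simp)
  | coe a =>
    induction y with
    | top =>
      rw [hjoin_top_right]
      exact isLUB_of_top_mem (by simp)
    | coe b =>
      rcases (hwf a b).eq_empty_or_singleton with h | ⟨c, h⟩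
      · rw [hjoin_coe_of_mcs_eq_empty h]
        exact isLUB_coe_pair_top_of_mcs_eq_empty h
      · rw [hjoin_coe_of_mcs_eq_singleton h]
        exact isLUB_coe_pair_of_mcs_eq_singleton h

end

/-- In a well-formed hierarchy, `join x y` is the least upper bound of `x` and `y`;
hence the extended hierarchy with `join` is a semilattice with supremum `join`. -/
theorem hjoin_isLUB {S : Type*} [Fintype S] [PartialOrder S]
    (hwf : ∀ a b : S, (mcs a b).Subsingleton) (x y : WithTop S) :
    x ≤ hjoin x y ∧ y ≤ hjoin x y ∧ ∀ z : WithTop S, x ≤ z → y ≤ z → hjoin x y ≤ z := by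
  obtain ⟨hub, hleast⟩ := isLUB_hjoin hwf x y
  exact ⟨hub (Set.mem_insert x {y}), hub (Set.mem_insert_of_mem x rfl),
    fun z hx hy => hleast (by simp [upperBounds_insert, hx, hy])⟩
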